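/- arXiv:0811.2046 — 4 statements merged into one kernel-verified Lean document; each statement's English description precedes it below -/
import Mathlib

section
/- Let a, b > 0, and let G_a, G_b be independent random variables with gamma distributions of shape parameters a, b respectively (densities x^{a-1}e^{-x}/Γ(a) and x^{b-1}e^{-x}/Γ(b) on (0,∞)). Then the pair (G_a + G_b, G_a/(G_a + G_b)) has the law of (G_{a+b}, B_{a,b}) where G_{a+b} is gamma distributed with parameter a+b, B_{a,b} is beta distributed with parameters (a,b), and G_{a+b} and B_{a,b} are independent. -/
open Real MeasureTheory ProbabilityTheory

/-- Density of the gamma distribution with shape parameter `a` (rate 1). -/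
noncomputable def gammaD (a : ℝ) : ℝ → ENNReal := fun x =>
  ENNReal.ofReal (if 0 < x then x ^ (a - 1) * Real.exp (-x) / Real.Gamma a else 0)

/-- Density of the beta distribution with parameters `(a, b)`. -/
noncomputable def betaD (a b : ℝ) : ℝ → ENNReal := fun x =>
  ENNReal.ofReal (if 0 < x ∧ x < 1 then
    x ^ (a - 1) * (1 - x) ^ (b - 1) / (Real.Gamma a * Real.Gamma b / Real.Gamma (a + b))
    else 0)

open Set
open scoped ENNReal

noncomputable def Tm : ℝ × ℝ → ℝ × ℝ := fun z => (z.1 + z.2, z.1 / (z.1 + z.2))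

def Vs : Set (ℝ × ℝ) := Ioi (0:ℝ) ×ˢ Ioi (0:ℝ)
def Us : Set (ℝ × ℝ) := Ioi (0:ℝ) ×ˢ Ioo (0:ℝ) 1

noncomputable def Bm : ℝ × ℝ → (ℝ × ℝ) →L[ℝ] (ℝ × ℝ) := fun z =>
  LinearMap.toContinuousLinearMap (Matrix.toLin (Module.Basis.finTwoProd ℝ) (Module.Basis.finTwoProd ℝ)
    !![1, 1; z.2 / (z.1 + z.2) ^ 2, -(z.1 / (z.1 + z.2) ^ 2)])

lemma Tm_meas : Measurable Tm :=
  (measurable_fst.add measurable_snd).prodMk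
    (measurable_fst.div (measurable_fst.add measurable_snd))

lemma hasFDeriv_Tm {z : ℝ × ℝ} (hz : z.1 + z.2 ≠ 0) : HasFDerivAt Tm (Bm z) z := by
  unfold Tm Bm
  rw [Matrix.toLin_finTwoProd_toContinuousLinearMap]
  have h1 : HasFDerivAt (fun z : ℝ × ℝ => z.1 + z.2)
      (ContinuousLinearMap.fst ℝ ℝ ℝ + ContinuousLinearMap.snd ℝ ℝ ℝ) z :=
    hasFDerivAt_fst.add hasFDerivAt_snd
  have h3 : HasFDerivAt (fun z : ℝ × ℝ => (z.1 + z.2)⁻¹)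
      ((-((z.1 + z.2) ^ 2)⁻¹) • (ContinuousLinearMap.fst ℝ ℝ ℝ + ContinuousLinearMap.snd ℝ ℝ ℝ)) z :=
    (hasDerivAt_inv hz).comp_hasFDerivAt z h1
  have h2 : HasFDerivAt (fun z : ℝ × ℝ => z.1 * (z.1 + z.2)⁻¹)
      (z.1 • ((-((z.1 + z.2) ^ 2)⁻¹) • (ContinuousLinearMap.fst ℝ ℝ ℝ + ContinuousLinearMap.snd ℝ ℝ ℝ))
        + (z.1 + z.2)⁻¹ • ContinuousLinearMap.fst ℝ ℝ ℝ) z :=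
    hasFDerivAt_fst.mul h3
  have h2' : HasFDerivAt (fun z : ℝ × ℝ => z.1 / (z.1 + z.2))
      (z.1 • ((-((z.1 + z.2) ^ 2)⁻¹) • (ContinuousLinearMap.fst ℝ ℝ ℝ + ContinuousLinearMap.snd ℝ ℝ ℝ))
        + (z.1 + z.2)⁻¹ • ContinuousLinearMap.fst ℝ ℝ ℝ) z := by
    simpa only [div_eq_mul_inv] using h2
  refine (h1.prodMk h2').congr_fderiv ?_
  · refine ContinuousLinearMap.ext fun w => Prod.ext ?_ ?_
    · simp
    simp
    field_simp
    ring

lemma Bm_det {z : ℝ × ℝ} (hz : z.1 + z.2 ≠ 0) :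
    (Bm z).det = -(z.1 + z.2)⁻¹ := by
  simp only [Bm, LinearMap.det_toContinuousLinearMap, LinearMap.det_toLin,
    Matrix.det_fin_two_of]
  field_simp
  ring

lemma Tm_injOn : Set.InjOn Tm Vs := by
  rintro ⟨x, y⟩ ⟨hx, hy⟩ ⟨x', y'⟩ ⟨hx', hy'⟩ h
  simp only [Tm, Prod.mk.injEq] at h
  obtain ⟨h1, h2⟩ := h
  simp only [mem_Ioi] at hx hy hx' hy'
  have hs : x + y > 0 := by linarith
  have hx0 : x = x' := by
    rw [h1] at h2
    field_simp at h2
    exact h2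
  exact Prod.ext hx0 (by linarith)

lemma Tm_image : Tm '' Vs = Us := by
  ext ⟨s, p⟩
  constructor
  · rintro ⟨⟨x, y⟩, ⟨hx, hy⟩, h⟩
    simp only [mem_Ioi] at hx hy
    simp only [Tm, Prod.mk.injEq] at h
    obtain ⟨h1, h2⟩ := h
    have hs : 0 < x + y := by linarith
    refine ⟨?_, ?_⟩
    · simp only [← h1, mem_Ioi]; linarith
    · simp only [← h1, ← h2, mem_Ioo]
      refine ⟨by positivity, ?_⟩
      rw [div_lt_one hs]; linarith
  · rintro ⟨hs, hp⟩
    simp only [mem_Ioi] at hs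
    simp only [mem_Ioo] at hp
    refine ⟨(s * p, s * (1 - p)), ⟨?_, ?_⟩, ?_⟩
    · exact mul_pos hs hp.1
    · exact mul_pos hs (by linarith [hp.2])
    · show (s * p + s * (1 - p), s * p / (s * p + s * (1 - p))) = (s, p)
      have h1 : s * p + s * (1 - p) = s := by ring
      have hsne : s ≠ 0 := ne_of_gt hs
      rw [h1]
      have h2 : s * p / s = p := by field_simp
      rw [h2]

lemma key_density {a b : ℝ} (ha : 0 < a) (hb : 0 < b) {z : ℝ × ℝ} (hz : z ∈ Vs) :
    gammaD a z.1 * gammaD b z.2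
      = ENNReal.ofReal |(Bm z).det| * (gammaD (a + b) (Tm z).1 * betaD a b (Tm z).2) := by
  obtain ⟨hx, hy⟩ := hz
  simp only [mem_Ioi] at hx hy
  have hs : 0 < z.1 + z.2 := by linarith
  have hsne : z.1 + z.2 ≠ 0 := ne_of_gt hs
  have hGa := Real.Gamma_pos_of_pos ha
  have hGb := Real.Gamma_pos_of_pos hb
  have hGab := Real.Gamma_pos_of_pos (by linarith : 0 < a + b)
  have hdet : |(Bm z).det| = (z.1 + z.2)⁻¹ := by
    rw [Bm_det hsne, abs_neg, abs_of_pos (by positivity)]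
  rw [hdet]
  have hT1 : (Tm z).1 = z.1 + z.2 := rfl
  have hT2 : (Tm z).2 = z.1 / (z.1 + z.2) := rfl
  rw [hT1, hT2]
  have hp1 : 0 < z.1 / (z.1 + z.2) := by positivity
  have hp2 : z.1 / (z.1 + z.2) < 1 := by rw [div_lt_one hs]; linarith
  simp only [gammaD, betaD, if_pos hx, if_pos hy, if_pos hs, if_pos (And.intro hp1 hp2)]
  rw [← ENNReal.ofReal_mul (by positivity), ← ENNReal.ofReal_mul (by positivity),
    ← ENNReal.ofReal_mul (by positivity)]
  congr 1
  have h1m : 1 - z.1 / (z.1 + z.2) = z.2 / (z.1 + z.2) := by field_simp; ring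
  rw [h1m]
  have hd1 : (z.1 / (z.1 + z.2)) ^ (a - 1) = z.1 ^ (a - 1) / (z.1 + z.2) ^ (a - 1) :=
    Real.div_rpow hx.le hs.le _
  have hd2 : (z.2 / (z.1 + z.2)) ^ (b - 1) = z.2 ^ (b - 1) / (z.1 + z.2) ^ (b - 1) :=
    Real.div_rpow hy.le hs.le _
  have hsplit : (z.1 + z.2) ^ (a + b - 1)
      = (z.1 + z.2) ^ (a - 1) * (z.1 + z.2) ^ (b - 1) * (z.1 + z.2) := by
    rw [show a + b - 1 = (a - 1) + ((b - 1) + 1) by ring, Real.rpow_add hs,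
      Real.rpow_add hs, Real.rpow_one, mul_assoc]
  have hexp : Real.exp (-(z.1 + z.2)) = Real.exp (-z.1) * Real.exp (-z.2) := by
    rw [← Real.exp_add]; ring_nf
  rw [hd1, hd2, hsplit, hexp]
  have e1 : (z.1 + z.2) ^ (a - 1) ≠ 0 := by positivity
  have e2 : (z.1 + z.2) ^ (b - 1) ≠ 0 := by positivity
  field_simp
lemma measurable_gammaD (a : ℝ) : Measurable (gammaD a) := by
  apply Measurable.ennreal_ofReal
  apply Measurable.ite measurableSet_Ioi
  · fun_prop
  · fun_prop

lemma measurable_betaD (a b : ℝ) : Measurable (betaD a b) := by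
  apply Measurable.ennreal_ofReal
  apply Measurable.ite
  · exact (measurableSet_Ioi.inter measurableSet_Iio)
  · fun_prop
  · fun_prop

lemma sf_gammaD (a : ℝ) : SigmaFinite ((volume : Measure ℝ).withDensity (gammaD a)) := by
  unfold gammaD; infer_instance

lemma sf_betaD (a b : ℝ) : SigmaFinite ((volume : Measure ℝ).withDensity (betaD a b)) := by
  unfold betaD; infer_instance

lemma map_withDensity_comp {α β : Type*} [MeasurableSpace α] [MeasurableSpace β]
    (μ : Measure α) {f : α → β} (hf : Measurable f) {g : β → ℝ≥0∞} (hg : Measurable g) :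
    Measure.map f (μ.withDensity (g ∘ f)) = (Measure.map f μ).withDensity g := by
  ext s hs
  rw [Measure.map_apply hf hs, withDensity_apply _ (hf hs), withDensity_apply _ hs,
    setLIntegral_map hs hg hf]
  rfl

lemma prod_withDensity {μ ν : Measure ℝ} [SigmaFinite μ] [SigmaFinite ν]
    {f g : ℝ → ℝ≥0∞} (hf : Measurable f) (hg : Measurable g)
    [SigmaFinite (μ.withDensity f)] [SigmaFinite (ν.withDensity g)] :
    (μ.withDensity f).prod (ν.withDensity g)
      = (μ.prod ν).withDensity (fun z => f z.1 * g z.2) := by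
  refine Measure.prod_eq fun s t hs ht => ?_
  rw [withDensity_apply _ (hs.prod ht), ← Measure.prod_restrict,
    lintegral_prod_mul hf.aemeasurable hg.aemeasurable,
    withDensity_apply _ hs, withDensity_apply _ ht]

lemma Bm_det_formula (z : ℝ × ℝ) :
    (Bm z).det = -(z.1 / (z.1 + z.2) ^ 2) - z.2 / (z.1 + z.2) ^ 2 := by
  simp only [Bm, LinearMap.det_toContinuousLinearMap, LinearMap.det_toLin,
    Matrix.det_fin_two_of]
  ring

lemma main_measure {a b : ℝ} (ha : 0 < a) (hb : 0 < b) :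
    Measure.map Tm (((volume : Measure ℝ).withDensity (gammaD a)).prod
        ((volume : Measure ℝ).withDensity (gammaD b)))
      = ((volume : Measure ℝ).withDensity (gammaD (a + b))).prod
          ((volume : Measure ℝ).withDensity (betaD a b)) := by
  classical
  haveI := sf_gammaD a; haveI := sf_gammaD b
  haveI := sf_gammaD (a + b); haveI := sf_betaD a b
  rw [_root_.prod_withDensity (measurable_gammaD a) (measurable_gammaD b),
      _root_.prod_withDensity (measurable_gammaD (a + b)) (measurable_betaD a b)]
  set k : ℝ × ℝ → ℝ≥0∞ := fun z => gammaD a z.1 * gammaD b z.2 with hkdef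
  set h : ℝ × ℝ → ℝ≥0∞ := fun w => gammaD (a + b) w.1 * betaD a b w.2 with hhdef
  have hh : Measurable h :=
    ((measurable_gammaD (a + b)).comp measurable_fst).mul
      ((measurable_betaD a b).comp measurable_snd)
  have hVmeas : MeasurableSet Vs := measurableSet_Ioi.prod measurableSet_Ioi
  have hUmeas : MeasurableSet Us := measurableSet_Ioi.prod measurableSet_Ioo
  have hdetmeas : Measurable fun z : ℝ × ℝ => ENNReal.ofReal |(Bm z).det| := by
    have : (fun z : ℝ × ℝ => ENNReal.ofReal |(Bm z).det|)
        = fun z : ℝ × ℝ =>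
          ENNReal.ofReal |(-(z.1 / (z.1 + z.2) ^ 2) - z.2 / (z.1 + z.2) ^ 2)| := by
      funext z; rw [Bm_det_formula]
    rw [this]; fun_prop
  have hk : k = Vs.indicator k := by
    funext z
    rw [Set.indicator_apply]
    split_ifs with hzv
    · rfl
    · have : ¬ 0 < z.1 ∨ ¬ 0 < z.2 := by
        by_contra hc; push_neg at hc; exact hzv ⟨hc.1, hc.2⟩
      rcases this with h1 | h2
      · simp [hkdef, gammaD, if_neg h1]
      · simp [hkdef, gammaD, if_neg h2]
  have hhind : h = Us.indicator h := by
    funext w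
    rw [Set.indicator_apply]
    split_ifs with hwu
    · rfl
    · have : ¬ 0 < w.1 ∨ ¬ (0 < w.2 ∧ w.2 < 1) := by
        by_contra hc; push_neg at hc
        exact hwu ⟨hc.1, by simpa [Set.mem_Ioo] using hc.2⟩
      rcases this with h1 | h2
      · simp [hhdef, gammaD, if_neg h1]
      · simp [hhdef, betaD, if_neg h2]
  have hderiv : ∀ x ∈ Vs, HasFDerivWithinAt Tm (Bm x) Vs x := by
    rintro x ⟨hx1, hx2⟩
    simp only [Set.mem_Ioi] at hx1 hx2
    exact (hasFDeriv_Tm (by positivity : (0:ℝ) < x.1 + x.2).ne').hasFDerivWithinAt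
  have jac : Measure.map Tm
        (((volume.prod volume : Measure (ℝ × ℝ)).restrict Vs).withDensity
          fun z => ENNReal.ofReal |(Bm z).det|)
      = (volume.prod volume : Measure (ℝ × ℝ)).restrict Us := by
    rw [← Tm_image]
    exact map_withDensity_abs_det_fderiv_eq_addHaar _ hVmeas.nullMeasurableSet hderiv Tm_injOn
  calc Measure.map Tm ((volume.prod volume : Measure (ℝ × ℝ)).withDensity k)
      = Measure.map Tm
          (((volume.prod volume : Measure (ℝ × ℝ)).restrict Vs).withDensity k) := by
        conv_lhs => rw [hk]
        rw [withDensity_indicator hVmeas]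
    _ = Measure.map Tm
          (((volume.prod volume : Measure (ℝ × ℝ)).restrict Vs).withDensity
            ((fun z => ENNReal.ofReal |(Bm z).det|) * (h ∘ Tm))) := by
        congr 1
        apply withDensity_congr_ae
        refine (ae_restrict_iff' hVmeas).mpr (Filter.Eventually.of_forall fun z hz => ?_)
        simpa using key_density ha hb hz
    _ = Measure.map Tm
          ((((volume.prod volume : Measure (ℝ × ℝ)).restrict Vs).withDensity
            (fun z => ENNReal.ofReal |(Bm z).det|)).withDensity (h ∘ Tm)) := by
        rw [withDensity_mul _ hdetmeas (hh.comp Tm_meas)]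
    _ = (Measure.map Tm
          (((volume.prod volume : Measure (ℝ × ℝ)).restrict Vs).withDensity
            (fun z => ENNReal.ofReal |(Bm z).det|))).withDensity h :=
        map_withDensity_comp _ Tm_meas hh
    _ = ((volume.prod volume : Measure (ℝ × ℝ)).restrict Us).withDensity h := by rw [jac]
    _ = (volume.prod volume : Measure (ℝ × ℝ)).withDensity h := by
        rw [← withDensity_indicator hUmeas, ← hhind]

theorem stmt_2 {Ω : Type*} [MeasurableSpace Ω] (μ : Measure Ω) [IsProbabilityMeasure μ]
    (a b : ℝ) (ha : 0 < a) (hb : 0 < b)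
    (X Y : Ω → ℝ) (hX : Measurable X) (hY : Measurable Y)
    (hind : IndepFun X Y μ)
    (hlawX : μ.map X = (volume : Measure ℝ).withDensity (gammaD a))
    (hlawY : μ.map Y = (volume : Measure ℝ).withDensity (gammaD b)) :
    μ.map (fun ω => (X ω + Y ω, X ω / (X ω + Y ω)))
      = ((volume : Measure ℝ).withDensity (gammaD (a + b))).prod
          ((volume : Measure ℝ).withDensity (betaD a b)) := by
  have hjoint : μ.map (fun ω => (X ω, Y ω))
      = ((volume : Measure ℝ).withDensity (gammaD a)).prod
          ((volume : Measure ℝ).withDensity (gammaD b)) := by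
    rw [← hlawX, ← hlawY]
    exact (indepFun_iff_map_prod_eq_prod_map_map hX.aemeasurable hY.aemeasurable).mp hind
  have hcomp : (fun ω => (X ω + Y ω, X ω / (X ω + Y ω))) = Tm ∘ (fun ω => (X ω, Y ω)) := rfl
  rw [hcomp, ← Measure.map_map Tm_meas (hX.prodMk hY), hjoint]
  exact main_measure ha hb
end

section
/- For α > 1, the function x ↦ (sin(π/α)/(2π/α)) · 1/(1+|x|^α) on ℝ is a probability density, i.e., ∫_ℝ (sin(π/α)/(2π/α)) · 1/(1+|x|^α) dx = 1. -/
open Real MeasureTheory Set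

lemma beta_real {s : ℝ} (hs0 : 0 < s) (hs1 : s < 1) :
    ∫ x in Ioo (0:ℝ) 1, x ^ (s - 1) * (1 - x) ^ (-s) = π / Real.sin (π * s) := by
  have hsin : Real.sin (π * s) ≠ 0 := by
    apply ne_of_gt
    apply Real.sin_pos_of_pos_of_lt_pi
    · positivity
    · nlinarith [Real.pi_pos]
  have h1 : Complex.betaIntegral s (1 - s) =
      ((∫ x in (0:ℝ)..1, x ^ (s - 1) * (1 - x) ^ (-s) : ℝ) : ℂ) := by
    rw [Complex.betaIntegral, ← intervalIntegral.integral_ofReal]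
    apply intervalIntegral.integral_congr
    intro x hx
    rw [uIcc_of_le (by norm_num : (0:ℝ) ≤ 1)] at hx
    have e2 : ((s:ℂ)) - 1 = ((s - 1 : ℝ) : ℂ) := by push_cast; ring
    have e1 : ((1:ℂ) - s) - 1 = ((-s : ℝ) : ℂ) := by push_cast; ring
    dsimp only
    rw [e1, e2, ← Complex.ofReal_cpow hx.1, ← Complex.ofReal_one, ← Complex.ofReal_sub,
      ← Complex.ofReal_cpow (by linarith [hx.2]), ← Complex.ofReal_mul]
  have h2 : Complex.betaIntegral s (1 - s) = ↑π / Complex.sin (π * s) := by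
    have hb := Complex.Gamma_mul_Gamma_eq_betaIntegral (s := (s:ℂ)) (t := 1 - s)
      (by simpa using hs0)
      (by simp only [Complex.sub_re, Complex.one_re, Complex.ofReal_re]; linarith)
    rw [← Complex.Gamma_mul_Gamma_one_sub (s : ℂ), hb]
    norm_num [Complex.Gamma_one]
  have h3 : (∫ x in (0:ℝ)..1, x ^ (s - 1) * (1 - x) ^ (-s)) = π / Real.sin (π * s) := by
    have h := h1.symm.trans h2
    have hc : ((π / Real.sin (π * s) : ℝ) : ℂ) = ↑π / Complex.sin (↑π * ↑s) := by
      push_cast [Complex.ofReal_sin]; ring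
    rw [← hc] at h
    exact_mod_cast h
  rw [intervalIntegral.integral_of_le zero_le_one, integral_Ioc_eq_integral_Ioo] at h3
  exact h3

lemma halfline {s : ℝ} (hs0 : 0 < s) (hs1 : s < 1) :
    ∫ t in Ioi (0:ℝ), t ^ (s - 1) / (1 + t) = π / Real.sin (π * s) := by
  rw [← beta_real hs0 hs1]
  have himg : (fun t : ℝ => t / (1 + t)) '' Ioi 0 = Ioo 0 1 := by
    ext x
    constructor
    · rintro ⟨t, ht, rfl⟩
      have ht0 : (0:ℝ) < t := ht
      have ht' : (0:ℝ) < 1 + t := by linarith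
      exact ⟨by positivity, by rw [div_lt_one ht']; linarith⟩
    · rintro ⟨hx0, hx1⟩
      refine ⟨x / (1 - x), mem_Ioi.mpr (div_pos hx0 (by linarith)), ?_⟩
      have h1x : (1:ℝ) - x > 0 := by linarith
      field_simp
      ring
  have hderiv : ∀ t ∈ Ioi (0:ℝ), HasDerivWithinAt (fun t : ℝ => t / (1 + t))
      (((1 + t) ^ 2)⁻¹) (Ioi 0) t := by
    intro t ht
    have ht0 : (0:ℝ) < t := ht
    have ht' : (1:ℝ) + t ≠ 0 := by positivity
    have := (hasDerivAt_id t).div ((hasDerivAt_const t 1).add (hasDerivAt_id t)) ht'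
    convert this.hasDerivWithinAt using 1
    · rfl
    · rfl
    · rfl
    · simp only [Pi.add_apply, id]; ring
  have hinj : InjOn (fun t : ℝ => t / (1 + t)) (Ioi 0) := by
    intro a ha b hb hab
    have ha0 : (0:ℝ) < a := ha
    have hb0 : (0:ℝ) < b := hb
    simp only at hab
    have ha' : (1:ℝ) + a ≠ 0 := by positivity
    have hb' : (1:ℝ) + b ≠ 0 := by positivity
    field_simp at hab
    linarith
  have him := integral_image_eq_integral_abs_deriv_smul measurableSet_Ioi hderiv hinj
    (fun x : ℝ => x ^ (s - 1) * (1 - x) ^ (-s))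
  rw [himg] at him
  rw [him]
  apply setIntegral_congr_fun measurableSet_Ioi
  intro t ht
  simp only [smul_eq_mul]
  have ht0 : (0:ℝ) < t := ht
  have hu : (0:ℝ) < 1 + t := by linarith
  have h1mt : 1 - t / (1 + t) = (1 + t)⁻¹ := by field_simp; ring
  rw [h1mt, Real.inv_rpow hu.le, ← Real.rpow_neg hu.le, neg_neg,
    Real.div_rpow ht0.le hu.le, abs_of_pos (by positivity)]
  have hpow : (1 + t) ^ s = (1 + t) ^ (s - 1) * (1 + t) := by
    rw [show s = s - 1 + 1 by ring, Real.rpow_add_one (ne_of_gt hu)]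
    ring_nf
  rw [hpow]
  have hne : (1 + t) ^ (s - 1) ≠ 0 := ne_of_gt (Real.rpow_pos_of_pos hu _)
  field_simp

theorem stmt_7 (α : ℝ) (hα : 1 < α) :
    ∫ x : ℝ, Real.sin (π / α) / (2 * π / α) * (1 / (1 + |x| ^ α)) = 1 := by
  have hα0 : (0:ℝ) < α := by linarith
  have hs0 : (0:ℝ) < 1 / α := by positivity
  have hs1 : 1 / α < 1 := by rw [div_lt_one hα0]; linarith
  have hsin : 0 < Real.sin (π / α) := by
    apply Real.sin_pos_of_pos_of_lt_pi
    · positivity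
    · rw [div_lt_iff₀ hα0]; nlinarith [Real.pi_pos]
  set c := Real.sin (π / α) / (2 * π / α) with hc
  have key : ∫ t in Ioi (0:ℝ), 1 / (1 + t ^ α) = (1 / α) * (π / Real.sin (π / α)) := by
    have h := integral_comp_rpow_Ioi_of_pos
      (g := fun y : ℝ => (1 / α) * (y ^ (1 / α - 1) / (1 + y))) (p := α) hα0
    simp only [smul_eq_mul] at h
    have h2 : (∫ y in Ioi (0:ℝ), 1 / α * (y ^ (1 / α - 1) / (1 + y)))
        = (1 / α) * (π / Real.sin (π / α)) := by
      rw [MeasureTheory.integral_const_mul, halfline hs0 hs1, mul_one_div]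
    rw [h2] at h
    rw [← h]
    apply setIntegral_congr_fun measurableSet_Ioi
    intro x hx
    have hx0 : (0:ℝ) < x := hx
    have hxa : (0:ℝ) < x ^ α := Real.rpow_pos_of_pos hx0 _
    have e1 : (x ^ α) ^ (1 / α - 1) = x ^ (α * (1 / α - 1)) := by
      rw [← Real.rpow_mul hx0.le]
    have e2 : α * (1 / α - 1) = 1 - α := by field_simp
    have e3 : x ^ (α - 1) * x ^ (1 - α) = 1 := by
      rw [← Real.rpow_add hx0, show α - 1 + (1 - α) = 0 by ring, Real.rpow_zero]
    dsimp only
    rw [e1, e2]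
    field_simp
    nlinarith [e3, mul_pos hxa (mul_pos (Real.rpow_pos_of_pos hx0 (α-1)) hα0)]
  rw [show (fun x : ℝ => c * (1 / (1 + |x| ^ α))) = fun x : ℝ =>
      (fun t : ℝ => c * (1 / (1 + t ^ α))) |x| from rfl] at *
  rw [integral_comp_abs (f := fun t : ℝ => c * (1 / (1 + t ^ α))),
    MeasureTheory.integral_const_mul, key, hc]
  have hπ : π ≠ 0 := Real.pi_ne_zero
  field_simp
end

section
/- Let 1 < α ≤ 2, q > 0, and define u_q(x) = (1/π) ∫₀^∞ cos(xξ)/(q+ξ^α) dξ and h_q(x) = u_q(0) - u_q(x). Then lim_{q→0+} u_q(x)/u_q(0) = 1 for every x ∈ ℝ, and lim_{q→0+} h_q(x) = (1/π) ∫₀^∞ (1-cos(xξ))/ξ^α dξ. -/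
open Real MeasureTheory Filter Topology

lemma meas_inv (α q : ℝ) : Measurable (fun ξ : ℝ => 1 / (q + ξ ^ α)) :=
  measurable_const.div (measurable_const.add (measurable_id.pow_const α))

lemma integrable_inv (α q : ℝ) (h1 : 1 < α) (hq : 0 < q) :
    IntegrableOn (fun ξ : ℝ => 1 / (q + ξ ^ α)) (Set.Ioi 0) := by
  have hpos : ∀ ξ : ℝ, 0 < ξ → 0 < q + ξ ^ α := fun ξ hξ =>
    add_pos hq (Real.rpow_pos_of_pos hξ α)
  rw [← Set.Ioc_union_Ioi_eq_Ioi (zero_le_one' ℝ)]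
  apply MeasureTheory.IntegrableOn.union
  · apply Integrable.mono' (integrableOn_const (C := 1 / q) measure_Ioc_lt_top.ne)
      ((meas_inv α q).aestronglyMeasurable.restrict)
    refine (ae_restrict_iff' measurableSet_Ioc).2 (ae_of_all _ fun ξ hξ => ?_)
    rw [Real.norm_eq_abs, abs_of_nonneg (one_div_nonneg.2 (hpos ξ hξ.1).le)]
    rw [div_le_div_iff₀ (hpos ξ hξ.1) hq]
    nlinarith [Real.rpow_pos_of_pos hξ.1 α]
  · apply Integrable.mono' (integrableOn_Ioi_rpow_of_lt (by linarith : -α < -1) one_pos)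
      ((meas_inv α q).aestronglyMeasurable.restrict)
    refine (ae_restrict_iff' measurableSet_Ioi).2 (ae_of_all _ fun ξ hξ => ?_)
    have hξ0 : (0:ℝ) < ξ := lt_trans one_pos hξ
    rw [Real.norm_eq_abs, abs_of_nonneg (one_div_nonneg.2 (hpos ξ hξ0).le),
      Real.rpow_neg hξ0.le, ← one_div]
    exact div_le_div_of_nonneg_left one_pos.le (Real.rpow_pos_of_pos hξ0 α)
      (le_add_of_nonneg_left hq.le)

lemma onesub_nonneg (t : ℝ) : 0 ≤ 1 - Real.cos t := by
  nlinarith [Real.cos_le_one t]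

lemma meas_bound (α x : ℝ) : Measurable (fun ξ : ℝ => (1 - Real.cos (x * ξ)) / ξ ^ α) :=
  ((measurable_const.sub (Real.measurable_cos.comp (measurable_const.mul measurable_id))).div
    (measurable_id.pow_const α))

lemma integrable_bound (α x : ℝ) (h1 : 1 < α) (h2 : α ≤ 2) :
    IntegrableOn (fun ξ : ℝ => (1 - Real.cos (x * ξ)) / ξ ^ α) (Set.Ioi 0) := by
  rw [← Set.Ioc_union_Ioi_eq_Ioi (zero_le_one' ℝ)]
  apply MeasureTheory.IntegrableOn.union
  · apply Integrable.mono' (g := fun _ => x ^ 2 / 2)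
      (integrableOn_const measure_Ioc_lt_top.ne)
      ((meas_bound α x).aestronglyMeasurable.restrict)
    refine (ae_restrict_iff' measurableSet_Ioc).2 (ae_of_all _ fun ξ hξ => ?_)
    have hξ0 := hξ.1
    have hξα : (0:ℝ) < ξ ^ α := Real.rpow_pos_of_pos hξ0 α
    rw [Real.norm_eq_abs, abs_of_nonneg (div_nonneg (onesub_nonneg _) hξα.le)]
    have hb : 1 - Real.cos (x * ξ) ≤ x ^ 2 * ξ ^ (2:ℝ) / 2 := by
      rw [Real.rpow_two]
      nlinarith [Real.one_sub_sq_div_two_le_cos (x := x * ξ)]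
    have hmono : ξ ^ (2:ℝ) ≤ ξ ^ α :=
      Real.rpow_le_rpow_of_exponent_ge hξ0 hξ.2 h2
    calc (1 - Real.cos (x * ξ)) / ξ ^ α ≤ (x ^ 2 * ξ ^ (2:ℝ) / 2) / ξ ^ α := by
          gcongr
      _ ≤ x ^ 2 / 2 := by
          rw [div_le_div_iff₀ hξα (by norm_num : (0:ℝ) < 2)]
          have h4 : (0:ℝ) < ξ ^ (2:ℝ) := Real.rpow_pos_of_pos hξ0 2
          nlinarith [sq_nonneg x]
  · apply Integrable.mono' (g := fun ξ => 2 * ξ ^ (-α))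
      ((integrableOn_Ioi_rpow_of_lt (by linarith : -α < -1) one_pos).const_mul 2)
      ((meas_bound α x).aestronglyMeasurable.restrict)
    refine (ae_restrict_iff' measurableSet_Ioi).2 (ae_of_all _ fun ξ hξ => ?_)
    have hξ0 : (0:ℝ) < ξ := lt_trans one_pos hξ
    have hξα : (0:ℝ) < ξ ^ α := Real.rpow_pos_of_pos hξ0 α
    rw [Real.norm_eq_abs, abs_of_nonneg (div_nonneg (onesub_nonneg _) hξα.le),
      Real.rpow_neg hξ0.le, ← div_eq_mul_inv]
    gcongr
    nlinarith [Real.neg_one_le_cos (x * ξ)]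

lemma tendsto_H (α x : ℝ) (h1 : 1 < α) (h2 : α ≤ 2) :
    Tendsto (fun q => ∫ ξ in Set.Ioi (0:ℝ), (1 - Real.cos (x * ξ)) / (q + ξ ^ α)) (𝓝[>] 0)
      (𝓝 (∫ ξ in Set.Ioi (0:ℝ), (1 - Real.cos (x * ξ)) / ξ ^ α)) := by
  apply tendsto_integral_filter_of_dominated_convergence
    (bound := fun ξ : ℝ => (1 - Real.cos (x * ξ)) / ξ ^ α)
  · filter_upwards [self_mem_nhdsWithin] with q _
    exact (((measurable_const.sub (Real.measurable_cos.comp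
      (measurable_const.mul measurable_id))).div
      (measurable_const.add (measurable_id.pow_const α)))).aestronglyMeasurable.restrict
  · filter_upwards [self_mem_nhdsWithin] with q hq
    refine (ae_restrict_iff' measurableSet_Ioi).2 (ae_of_all _ fun ξ hξ => ?_)
    have hξ0 : (0:ℝ) < ξ := hξ
    have hξα : (0:ℝ) < ξ ^ α := Real.rpow_pos_of_pos hξ0 α
    have hd : (0:ℝ) < q + ξ ^ α := add_pos hq hξα
    rw [Real.norm_eq_abs, abs_of_nonneg (div_nonneg (onesub_nonneg _) hd.le)]
    exact div_le_div_of_nonneg_left (onesub_nonneg _) hξα (le_add_of_nonneg_left hq.le)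
  · exact integrable_bound α x h1 h2
  · refine (ae_restrict_iff' measurableSet_Ioi).2 (ae_of_all _ fun ξ hξ => ?_)
    have hξα : (0:ℝ) < ξ ^ α := Real.rpow_pos_of_pos hξ α
    have hden : Tendsto (fun q : ℝ => q + ξ ^ α) (𝓝[>] 0) (𝓝 (ξ ^ α)) := by
      have h := ((continuous_id.add (continuous_const (y := ξ ^ α))).tendsto (0:ℝ)).mono_left
        (nhdsWithin_le_nhds (s := Set.Ioi (0:ℝ)))
      simpa [Pi.add_def] using h
    exact tendsto_const_nhds.div hden hξα.ne'

lemma U_eq (α q : ℝ) (h1 : 1 < α) (hq : 0 < q) :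
    ∫ ξ in Set.Ioi (0:ℝ), 1 / (q + ξ ^ α)
      = q ^ (1/α - 1) * ∫ t in Set.Ioi (0:ℝ), 1 / (1 + t ^ α) := by
  have hα0 : (0:ℝ) < α := by linarith
  have hb : (0:ℝ) < q ^ (1/α) := Real.rpow_pos_of_pos hq _
  have key := MeasureTheory.integral_comp_mul_left_Ioi
    (fun y : ℝ => 1 / (q + y ^ α)) 0 hb
  rw [mul_zero] at key
  have hcongr : ∀ t ∈ Set.Ioi (0:ℝ),
      (fun y : ℝ => 1 / (q + y ^ α)) (q ^ (1/α) * t) = q⁻¹ * (1 / (1 + t ^ α)) := by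
    intro t ht
    have ht0 : (0:ℝ) < t := ht
    have hpow : (q ^ (1/α) * t) ^ α = q * t ^ α := by
      rw [Real.mul_rpow hb.le ht0.le, ← Real.rpow_mul hq.le, one_div,
        inv_mul_cancel₀ hα0.ne', Real.rpow_one]
    have htα : (0:ℝ) < t ^ α := Real.rpow_pos_of_pos ht0 α
    simp only [hpow]
    field_simp
  rw [MeasureTheory.setIntegral_congr_fun measurableSet_Ioi hcongr] at key
  have key2 : ∫ ξ in Set.Ioi (0:ℝ), 1 / (q + ξ ^ α)
      = q ^ (1/α) * ∫ t in Set.Ioi (0:ℝ), q⁻¹ * (1 / (1 + t ^ α)) := by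
    rw [key, smul_eq_mul, ← mul_assoc, mul_inv_cancel₀ hb.ne', one_mul]
  rw [key2, MeasureTheory.integral_const_mul, ← mul_assoc]
  congr 1
  rw [← Real.rpow_neg_one q, ← Real.rpow_add hq]
  ring_nf

lemma C_pos (α : ℝ) (h1 : 1 < α) :
    0 < ∫ t in Set.Ioi (0:ℝ), 1 / (1 + t ^ α) := by
  have hint : IntegrableOn (fun t : ℝ => 1 / (1 + t ^ α)) (Set.Ioi 0) :=
    integrable_inv α 1 h1 one_pos
  have hsub : Set.Ioc (0:ℝ) 1 ⊆ Set.Ioi 0 := Set.Ioc_subset_Ioi_self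
  have hmono : ∫ t in Set.Ioc (0:ℝ) 1, 1 / (1 + t ^ α)
      ≤ ∫ t in Set.Ioi (0:ℝ), 1 / (1 + t ^ α) := by
    apply MeasureTheory.setIntegral_mono_set hint
    · refine (ae_restrict_iff' measurableSet_Ioi).2 (ae_of_all _ fun t ht => ?_)
      have : (0:ℝ) < 1 + t ^ α := add_pos one_pos (Real.rpow_pos_of_pos ht α)
      positivity
    · exact HasSubset.Subset.eventuallyLE hsub
  refine lt_of_lt_of_le ?_ hmono
  have hlow : ∫ t in Set.Ioc (0:ℝ) 1, (1:ℝ)/2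
      ≤ ∫ t in Set.Ioc (0:ℝ) 1, 1 / (1 + t ^ α) := by
    apply MeasureTheory.setIntegral_mono_on
      (integrableOn_const measure_Ioc_lt_top.ne) (hint.mono_set hsub)
      measurableSet_Ioc
    intro t ht
    have htα : (0:ℝ) < t ^ α := Real.rpow_pos_of_pos ht.1 α
    have htα1 : t ^ α ≤ 1 := Real.rpow_le_one ht.1.le ht.2 (by linarith)
    rw [div_le_div_iff₀ (by norm_num) (by linarith)]
    linarith
  refine lt_of_lt_of_le ?_ hlow
  simp [Real.volume_Ioc]

lemma rpow_tendsto (β : ℝ) (hβ : β < 0) :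
    Tendsto (fun q : ℝ => q ^ β) (𝓝[>] 0) atTop := by
  have hlog : Tendsto (fun q : ℝ => Real.exp (Real.log q * β)) (𝓝[>] 0) atTop := by
    apply Real.tendsto_exp_atTop.comp
    exact Tendsto.atBot_mul_const_of_neg hβ Real.tendsto_log_nhdsGT_zero
  refine hlog.congr' ?_
  filter_upwards [self_mem_nhdsWithin] with q hq
  rw [Real.rpow_def_of_pos hq]

lemma U_tendsto (α : ℝ) (h1 : 1 < α) :
    Tendsto (fun q => ∫ ξ in Set.Ioi (0:ℝ), 1 / (q + ξ ^ α)) (𝓝[>] 0) atTop := by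
  have hβ : 1/α - 1 < 0 := by
    rw [sub_neg, div_lt_one (by linarith : (0:ℝ) < α)]; linarith
  have h := (rpow_tendsto _ hβ).atTop_mul_const (C_pos α h1)
  refine h.congr' ?_
  filter_upwards [self_mem_nhdsWithin] with q hq
  exact (U_eq α q h1 hq).symm

/-- `q`-resolvent density of the symmetric `α`-stable Lévy process. -/
noncomputable def uRes (α q x : ℝ) : ℝ :=
  (1 / π) * ∫ ξ in Set.Ioi (0:ℝ), Real.cos (x * ξ) / (q + ξ ^ α)

lemma integrable_cos (α q x : ℝ) (h1 : 1 < α) (hq : 0 < q) :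
    IntegrableOn (fun ξ : ℝ => Real.cos (x * ξ) / (q + ξ ^ α)) (Set.Ioi 0) := by
  apply Integrable.mono' (integrable_inv α q h1 hq)
    (((Real.measurable_cos.comp (measurable_const.mul measurable_id)).div
      (measurable_const.add (measurable_id.pow_const α))).aestronglyMeasurable.restrict)
  refine (ae_restrict_iff' measurableSet_Ioi).2 (ae_of_all _ fun ξ hξ => ?_)
  have hd : (0:ℝ) < q + ξ ^ α := add_pos hq (Real.rpow_pos_of_pos hξ α)
  simp only [Function.comp_apply, id_eq, Pi.div_apply, Pi.add_apply, Pi.mul_apply]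
  rw [Real.norm_eq_abs, abs_div, abs_of_pos hd, div_le_div_iff₀ hd hd]
  have := abs_cos_le_one (x * ξ)
  nlinarith

lemma sub_eq (α q x : ℝ) (h1 : 1 < α) (hq : 0 < q) :
    uRes α q 0 - uRes α q x
      = (1 / π) * ∫ ξ in Set.Ioi (0:ℝ), (1 - Real.cos (x * ξ)) / (q + ξ ^ α) := by
  unfold uRes
  rw [← mul_sub]
  congr 1
  rw [← MeasureTheory.integral_sub]
  · apply MeasureTheory.setIntegral_congr_fun measurableSet_Ioi
    intro ξ hξ
    simp only [zero_mul, Real.cos_zero]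
    rw [← sub_div]
  · simpa [IntegrableOn] using integrable_cos α q 0 h1 hq
  · exact integrable_cos α q x h1 hq

lemma u0_eq (α q : ℝ) : uRes α q 0 = (1 / π) * ∫ ξ in Set.Ioi (0:ℝ), 1 / (q + ξ ^ α) := by
  unfold uRes; simp

theorem stmt_11 (α : ℝ) (h1 : 1 < α) (h2 : α ≤ 2) (x : ℝ) :
    Tendsto (fun q => uRes α q x / uRes α q 0) (𝓝[>] 0) (𝓝 1) ∧
    Tendsto (fun q => uRes α q 0 - uRes α q x) (𝓝[>] 0)
      (𝓝 ((1 / π) * ∫ ξ in Set.Ioi (0:ℝ), (1 - Real.cos (x * ξ)) / ξ ^ α)) := by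
  have hH := tendsto_H α x h1 h2
  have hU := U_tendsto α h1
  have hUpos : ∀ q : ℝ, 0 < q → 0 < ∫ ξ in Set.Ioi (0:ℝ), 1 / (q + ξ ^ α) := by
    intro q hq
    rw [U_eq α q h1 hq]
    exact mul_pos (Real.rpow_pos_of_pos hq _) (C_pos α h1)
  constructor
  · have key : Tendsto (fun q : ℝ =>
        1 - (∫ ξ in Set.Ioi (0:ℝ), (1 - Real.cos (x * ξ)) / (q + ξ ^ α)) /
          (∫ ξ in Set.Ioi (0:ℝ), 1 / (q + ξ ^ α))) (𝓝[>] 0) (𝓝 1) := by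
      have := tendsto_const_nhds (x := (1:ℝ)) (f := 𝓝[>] (0:ℝ)) |>.sub (hH.div_atTop hU)
      simpa using this
    refine key.congr' ?_
    filter_upwards [self_mem_nhdsWithin] with q hq
    have hq : (0:ℝ) < q := hq
    have hU0 := hUpos q hq
    have hx : uRes α q x = uRes α q 0 - (1/π) *
        ∫ ξ in Set.Ioi (0:ℝ), (1 - Real.cos (x * ξ)) / (q + ξ ^ α) := by
      rw [← sub_eq α q x h1 hq]; ring
    rw [hx, u0_eq]
    rw [eq_div_iff (by positivity : (1/π) * ∫ ξ in Set.Ioi (0:ℝ), 1 / (q + ξ ^ α) ≠ 0)]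
    field_simp
  · refine (hH.const_mul (1/π)).congr' ?_
    filter_upwards [self_mem_nhdsWithin] with q hq
    exact (sub_eq α q x h1 hq).symm
end

section
/- Suppose 1 < α < 2. Let q > 0 and u_q(x) = (1/π) ∫₀^∞ cos(xξ)/(q+ξ^α) dξ. Then for all a, x ∈ ℝ with 0 < 2|x| < |a|, there exists a constant C (depending only on α and q) such that |u_q(a-x) - u_q(a)| ≤ C/|a|. -/
open Real MeasureTheory Set Filter

section aux
variable {α q : ℝ}

lemma denom_pos (hq : 0 < q) {ξ : ℝ} (hξ : 0 ≤ ξ) : 0 < q + ξ ^ α :=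
  add_pos_of_pos_of_nonneg hq (Real.rpow_nonneg hξ α)

lemma hasDerivAt_f (hq : 0 < q) {ξ : ℝ} (hξ : 0 < ξ) :
    HasDerivAt (fun t : ℝ => (q + t ^ α)⁻¹)
      (-(α * ξ ^ (α - 1)) / (q + ξ ^ α) ^ 2) ξ := by
  have hd : HasDerivAt (fun t : ℝ => q + t ^ α) (α * ξ ^ (α - 1)) ξ := by
    have := (Real.hasDerivAt_rpow_const (p := α) (Or.inl hξ.ne')).const_add q
    simpa [mul_comm] using this
  have := hd.inv (ne_of_gt (denom_pos hq hξ.le))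
  exact this

lemma f'_nonpos (h1 : 1 < α) {ξ : ℝ} (hξ : 0 < ξ) :
    -(α * ξ ^ (α - 1)) / (q + ξ ^ α) ^ 2 ≤ 0 := by
  apply div_nonpos_of_nonpos_of_nonneg
  · simp only [neg_nonpos]
    exact mul_nonneg (by linarith) (Real.rpow_nonneg hξ.le _)
  · positivity

lemma cont_denom (h1 : 1 < α) : Continuous (fun t : ℝ => q + t ^ α) :=
  continuous_const.add (continuous_id.rpow_const (fun x => Or.inr (by linarith)))

lemma tendsto_f (h1 : 1 < α) :
    Tendsto (fun t : ℝ => (q + t ^ α)⁻¹) atTop (nhds 0) := by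
  apply Tendsto.inv_tendsto_atTop
  exact tendsto_atTop_add_const_left _ q (tendsto_rpow_atTop (by linarith))

lemma int_f' (h1 : 1 < α) (hq : 0 < q) :
    IntegrableOn (fun ξ : ℝ => -(α * ξ ^ (α - 1)) / (q + ξ ^ α) ^ 2) (Ioi 0) := by
  apply integrableOn_Ioi_deriv_of_nonpos
    (g := fun t : ℝ => (q + t ^ α)⁻¹) (l := 0)
  · exact ((cont_denom h1).continuousAt.inv₀ (ne_of_gt (denom_pos hq le_rfl))).continuousWithinAt
  · exact fun x hx => hasDerivAt_f hq hx
  · exact fun x hx => f'_nonpos h1 hx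
  · exact tendsto_f h1

lemma integral_f' (h1 : 1 < α) (hq : 0 < q) :
    ∫ ξ in Ioi (0:ℝ), -(α * ξ ^ (α - 1)) / (q + ξ ^ α) ^ 2 = -q⁻¹ := by
  have := integral_Ioi_of_hasDerivAt_of_nonpos
    (g := fun t : ℝ => (q + t ^ α)⁻¹) (l := 0) (a := 0)
    ((cont_denom h1).continuousAt.inv₀ (ne_of_gt (denom_pos hq le_rfl))).continuousWithinAt
    (fun x hx => hasDerivAt_f hq hx)
    (fun x hx => f'_nonpos h1 hx)
    (tendsto_f h1)
  have h0 : (0:ℝ) ^ α = 0 := Real.zero_rpow (by positivity)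
  rw [this]; simp [h0]

lemma int_f (h1 : 1 < α) (h2 : α < 2) (hq : 0 < q) :
    IntegrableOn (fun ξ : ℝ => (q + ξ ^ α)⁻¹) (Ioi 0) := by
  have hcont : ContinuousOn (fun ξ : ℝ => (q + ξ ^ α)⁻¹) (Ici 0) := by
    intro x hx
    exact ((cont_denom h1).continuousAt.inv₀ (ne_of_gt (denom_pos hq hx))).continuousWithinAt
  have h01 : IntegrableOn (fun ξ : ℝ => (q + ξ ^ α)⁻¹) (Ioc 0 1) :=
    ((hcont.mono (Icc_subset_Ici_self : Icc (0:ℝ) 1 ⊆ Ici 0)).integrableOn_Icc).mono_set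
      Ioc_subset_Icc_self
  have h1i : IntegrableOn (fun ξ : ℝ => (q + ξ ^ α)⁻¹) (Ioi 1) := by
    have hbase : IntegrableOn (fun ξ : ℝ => ξ ^ (-α)) (Ioi 1) :=
      integrableOn_Ioi_rpow_of_lt (by linarith) one_pos
    apply Integrable.mono hbase
    · exact (hcont.mono (fun x (hx : x ∈ Ioi (1:ℝ)) => (le_of_lt (lt_of_lt_of_le one_pos (le_of_lt (mem_Ioi.mp hx))) : (0:ℝ) ≤ x))).aestronglyMeasurable
        measurableSet_Ioi
    · filter_upwards [ae_restrict_mem measurableSet_Ioi] with x hx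
      have hx0 : (0:ℝ) < x := lt_trans one_pos hx
      have hpos := denom_pos (α := α) hq hx0.le
      rw [Real.norm_eq_abs, Real.norm_eq_abs, abs_of_nonneg (le_of_lt (inv_pos.mpr hpos)),
        Real.rpow_neg hx0.le, abs_of_nonneg (by positivity)]
      apply inv_anti₀ (by positivity)
      linarith [Real.rpow_nonneg hx0.le α]
  have : Ioi (0:ℝ) = Ioc 0 1 ∪ Ioi 1 := (Ioc_union_Ioi_eq_Ioi zero_le_one).symm
  rw [this]
  exact h01.union h1i

lemma int_cos (h1 : 1 < α) (h2 : α < 2) (hq : 0 < q) (y : ℝ) :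
    IntegrableOn (fun ξ : ℝ => Real.cos (y * ξ) * (q + ξ ^ α)⁻¹) (Ioi 0) := by
  apply Integrable.mono (int_f h1 h2 hq)
  · apply AEStronglyMeasurable.mul
    · exact (Real.continuous_cos.comp (continuous_const.mul continuous_id)).aestronglyMeasurable
    · exact (int_f h1 h2 hq).aestronglyMeasurable
  · filter_upwards [ae_restrict_mem measurableSet_Ioi] with x hx
    have hpos := denom_pos (α := α) hq (le_of_lt hx)
    rw [Real.norm_eq_abs, Real.norm_eq_abs, abs_mul, abs_of_nonneg (le_of_lt (inv_pos.mpr hpos))]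
    calc |Real.cos (y * x)| * (q + x ^ α)⁻¹ ≤ 1 * (q + x ^ α)⁻¹ :=
          mul_le_mul_of_nonneg_right (Real.abs_cos_le_one _) (le_of_lt (inv_pos.mpr hpos))
      _ = (q + x ^ α)⁻¹ := one_mul _

lemma key_bound (h1 : 1 < α) (h2 : α < 2) (hq : 0 < q) {y : ℝ} (hy : y ≠ 0) :
    |∫ ξ in Ioi (0:ℝ), Real.cos (y * ξ) / (q + ξ ^ α)| ≤ 1 / (q * |y|) := by
  have hy' : 0 < |y| := abs_pos.mpr hy
  set f' : ℝ → ℝ := fun ξ => -(α * ξ ^ (α - 1)) / (q + ξ ^ α) ^ 2 with hf'def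
  set g : ℝ → ℝ := fun ξ => Real.sin (y * ξ) / y * f' ξ with hgdef
  have habs : ∀ x : ℝ, 0 < x → ‖g x‖ ≤ (1/|y|) * (-f' x) := by
    intro x hx
    have : ‖g x‖ = |Real.sin (y*x)| / |y| * |f' x| := by
      rw [hgdef, Real.norm_eq_abs, abs_mul, abs_div]
    rw [this, abs_of_nonpos (f'_nonpos h1 hx)]
    gcongr
    · exact neg_nonneg.mpr (f'_nonpos h1 hx)
    · exact Real.abs_sin_le_one _
  have int_g : IntegrableOn g (Ioi 0) := by
    apply Integrable.mono (((int_f' h1 hq).neg.const_mul (1/|y|)))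
    · apply AEStronglyMeasurable.mul
      · exact ((Real.continuous_sin.comp (continuous_const.mul continuous_id)).div_const y).aestronglyMeasurable
      · exact (int_f' h1 hq).aestronglyMeasurable
    · filter_upwards [ae_restrict_mem measurableSet_Ioi] with x hx
      refine (habs x hx).trans ?_
      rw [Real.norm_eq_abs]
      simp only [Pi.neg_apply]
      exact le_abs_self _
  have int_c := int_cos h1 h2 hq y
  -- integration by parts via FTC on Ioi
  have hFTC : (∫ ξ in Ioi (0:ℝ), (Real.cos (y * ξ) * (q + ξ ^ α)⁻¹ + g ξ)) = 0 := by
    have := integral_Ioi_of_hasDerivAt_of_tendsto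
      (f := fun t : ℝ => Real.sin (y * t) / y * (q + t ^ α)⁻¹)
      (f' := fun t : ℝ => Real.cos (y * t) * (q + t ^ α)⁻¹ + g t)
      (a := 0) (m := 0) ?_ ?_ ?_ ?_
    · rw [this]; simp
    · exact (((Real.continuous_sin.comp (continuous_const.mul continuous_id)).div_const
        y).continuousAt.mul
        ((cont_denom h1).continuousAt.inv₀ (ne_of_gt (denom_pos hq le_rfl)))).continuousWithinAt
    · intro x hx
      have h0 : HasDerivAt (fun t : ℝ => y * t) y x := by
        simpa using (hasDerivAt_id x).const_mul y
      have hs : HasDerivAt (fun t : ℝ => Real.sin (y*t) / y) (Real.cos (y*x)) x := by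
        have := ((Real.hasDerivAt_sin (y*x)).comp x h0).div_const y
        simpa [mul_div_assoc, mul_div_cancel_right₀ _ hy] using this
      exact hs.mul (hasDerivAt_f hq hx)
    · exact int_c.add int_g
    · apply squeeze_zero_norm' (a := fun t : ℝ => (1/|y|) * (q + t ^ α)⁻¹)
      · filter_upwards [eventually_gt_atTop (0:ℝ)] with t ht
        have hpos := denom_pos (α := α) hq ht.le
        rw [Real.norm_eq_abs, abs_mul, abs_div, abs_of_nonneg (le_of_lt (inv_pos.mpr hpos))]
        have := Real.abs_sin_le_one (y * t)
        have h0 : (0:ℝ) ≤ (q + t ^ α)⁻¹ := le_of_lt (inv_pos.mpr hpos)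
        gcongr
      · simpa using (tendsto_f (q := q) h1).const_mul (1/|y|)
  have hsplit := integral_add (μ := volume.restrict (Ioi 0))
    (f := fun ξ : ℝ => Real.cos (y * ξ) * (q + ξ ^ α)⁻¹) (g := g) int_c int_g
  have heq : (∫ ξ in Ioi (0:ℝ), Real.cos (y * ξ) * (q + ξ ^ α)⁻¹) = - ∫ ξ in Ioi (0:ℝ), g ξ := by
    have := hFTC
    rw [hsplit] at this
    linarith
  have hb : |∫ ξ in Ioi (0:ℝ), g ξ| ≤ 1 / (q * |y|) := by
    have hn : |∫ ξ in Ioi (0:ℝ), g ξ| ≤ ∫ ξ in Ioi (0:ℝ), ‖g ξ‖ := by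
      exact norm_integral_le_integral_norm g
    have hm : (∫ ξ in Ioi (0:ℝ), ‖g ξ‖) ≤ ∫ ξ in Ioi (0:ℝ), (1/|y|) * (-f' ξ) := by
      apply setIntegral_mono_on int_g.norm ((int_f' h1 hq).neg.const_mul (1/|y|))
        measurableSet_Ioi
      intro x hx
      exact habs x hx
    have hv : (∫ ξ in Ioi (0:ℝ), (1/|y|) * (-f' ξ)) = 1 / (q * |y|) := by
      rw [integral_const_mul]
      rw [integral_neg, integral_f' h1 hq]
      field_simp
    calc |∫ ξ in Ioi (0:ℝ), g ξ| ≤ _ := hn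
      _ ≤ _ := hm
      _ = _ := hv
  calc |∫ ξ in Ioi (0:ℝ), Real.cos (y * ξ) / (q + ξ ^ α)|
      = |∫ ξ in Ioi (0:ℝ), Real.cos (y * ξ) * (q + ξ ^ α)⁻¹| := by
        simp only [div_eq_mul_inv]
    _ = |∫ ξ in Ioi (0:ℝ), g ξ| := by rw [heq, abs_neg]
    _ ≤ 1 / (q * |y|) := hb

end aux

lemma uRes_bound {α q : ℝ} (h1 : 1 < α) (h2 : α < 2) (hq : 0 < q) {y : ℝ} (hy : y ≠ 0) :
    |uRes α q y| ≤ 1 / (π * q * |y|) := by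
  have hy' : 0 < |y| := abs_pos.mpr hy
  have hπ : (0:ℝ) < π := Real.pi_pos
  rw [uRes, abs_mul, abs_of_nonneg (by positivity : (0:ℝ) ≤ 1/π)]
  calc 1/π * |∫ ξ in Set.Ioi (0:ℝ), Real.cos (y * ξ) / (q + ξ ^ α)|
      ≤ 1/π * (1 / (q * |y|)) := by
        gcongr
        exact key_bound h1 h2 hq hy
    _ = 1 / (π * q * |y|) := by field_simp

theorem stmt_12 (α q : ℝ) (h1 : 1 < α) (h2 : α < 2) (hq : 0 < q) :
    ∃ C : ℝ, ∀ a x : ℝ, 0 < 2 * |x| → 2 * |x| < |a| →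
      |uRes α q (a - x) - uRes α q a| ≤ C / |a| := by
  have hπ : (0:ℝ) < π := Real.pi_pos
  refine ⟨3 / (π * q), fun a x hx ha => ?_⟩
  have ha0 : 0 < |a| := by linarith
  have hax : |a| / 2 < |a - x| := by
    have := abs_sub_abs_le_abs_sub a x
    have hxa : |x| < |a| / 2 := by linarith
    linarith [abs_sub_abs_le_abs_sub a x]
  have hax0 : a - x ≠ 0 := by
    intro h
    rw [h] at hax
    simp at hax
    linarith
  have haa : a ≠ 0 := fun h => by simp [h] at ha0
  have b1 := uRes_bound h1 h2 hq hax0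
  have b2 := uRes_bound h1 h2 hq haa
  have key1 : 1 / (π * q * |a - x|) ≤ 2 / (π * q * |a|) := by
    rw [div_le_div_iff₀ (by positivity) (by positivity)]
    have : |a| ≤ 2 * |a - x| := by linarith
    nlinarith [mul_pos hπ hq]
  calc |uRes α q (a - x) - uRes α q a| ≤ |uRes α q (a - x)| + |uRes α q a| := abs_sub _ _
    _ ≤ 2 / (π * q * |a|) + 1 / (π * q * |a|) := add_le_add (b1.trans key1) b2
    _ = 3 / (π * q) / |a| := by field_simp; ring
end
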